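/- Let T be a linear operator on F[x] and Δ a linear operator lowering degree by exactly one (deg Δp = deg p - 1 for deg p ≥ 1, Δc = 0 for constants c, and Δ maps degree-n monic-leading polynomials to nonzero polynomials of degree n-1 for n ≥ 1). Then there exists a unique sequence of polynomials (q_n(x))_{n≥0} such that T = Σ_{n≥0} q_n(x̂) Δ^n, where the sum applied to any polynomial is finite (since Δ is locally nilpotent). -/
import Mathlib

open Polynomial Finset

section Aux

variable {F : Type*} [Field F]
  (Δ : Polynomial F →ₗ[F] Polynomial F)
  (hΔ1 : Δ 1 = 0)
  (hΔ : ∀ n : ℕ, 1 ≤ n → (Δ (X ^ n)).degree = ((n - 1 : ℕ) : WithBot ℕ))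

include hΔ1 hΔ in
lemma deg_lt' (p : Polynomial F) (hp : p ≠ 0) : (Δ p).degree < p.degree := by
  have hrep : Δ p = ∑ m ∈ p.support, p.coeff m • Δ (X ^ m) := by
    conv_lhs => rw [← p.sum_C_mul_X_pow_eq]
    rw [Polynomial.sum_def, map_sum]
    refine Finset.sum_congr rfl fun m _ => ?_
    rw [← Polynomial.smul_eq_C_mul, map_smul]
  rw [hrep]
  refine lt_of_le_of_lt (degree_sum_le _ _) ?_
  rw [Finset.sup_lt_iff (bot_lt_iff_ne_bot.mpr fun h => hp (degree_eq_bot.mp h))]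
  intro m hm
  refine lt_of_le_of_lt (degree_smul_le _ _) ?_
  rcases Nat.eq_zero_or_pos m with h0 | h1
  · subst h0
    simp only [pow_zero, hΔ1, degree_zero]
    exact bot_lt_iff_ne_bot.mpr fun h => hp (degree_eq_bot.mp h)
  · rw [hΔ m h1, p.degree_eq_natDegree hp, Nat.cast_lt]
    exact lt_of_lt_of_le (Nat.sub_lt h1 one_pos) (le_natDegree_of_mem_supp m hm)

include hΔ1 hΔ in
lemma deg_exact' (d : ℕ) (hd : 1 ≤ d) (p : Polynomial F) (hp : p.degree = (d : ℕ)) :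
    (Δ p).degree = ((d - 1 : ℕ) : WithBot ℕ) := by
  have hp0 : p ≠ 0 := fun h => by simp [h] at hp
  set c := p.leadingCoeff with hc
  have hcne : c ≠ 0 := leadingCoeff_ne_zero.mpr hp0
  set q : Polynomial F := C c * X ^ d with hqdef
  have hqdeg : q.degree = (d : ℕ) := by
    rw [hqdef, degree_C_mul_X_pow d hcne]
  have hql : q.leadingCoeff = c := by
    rw [hqdef]; simp [leadingCoeff_C_mul_X_pow]
  have hsplit : Δ p = Δ q + Δ (p - q) := by rw [← map_add]; ring_nf
  have hdq : (Δ q).degree = ((d - 1 : ℕ) : WithBot ℕ) := by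
    rw [hqdef, ← Polynomial.smul_eq_C_mul, map_smul, Polynomial.smul_eq_C_mul,
      degree_C_mul (a0 := hcne), hΔ d hd]
  have hrest : (Δ (p - q)).degree < ((d - 1 : ℕ) : WithBot ℕ) := by
    rcases eq_or_ne (p - q) 0 with h | h
    · rw [h, map_zero, degree_zero]; exact bot_lt_iff_ne_bot.mpr (by simp)
    · have h1 : (p - q).degree < (d : ℕ) := by
        rw [← hp]; exact degree_sub_lt (hp.trans hqdeg.symm) hp0 hql.symm
      have h2 : (p - q).natDegree < d := by
        rwa [(p - q).degree_eq_natDegree h, Nat.cast_lt] at h1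
      have h3 := deg_lt' Δ hΔ1 hΔ (p - q) h
      rw [(p - q).degree_eq_natDegree h] at h3
      exact lt_of_lt_of_le h3 (by exact_mod_cast Nat.le_sub_one_of_lt h2)
  rw [hsplit, degree_add_eq_left_of_degree_lt (hdq ▸ hrest), hdq]

include hΔ1 hΔ in
lemma deg_pow' (n : ℕ) : ∀ d : ℕ, n ≤ d → ∀ p : Polynomial F, p.degree = (d : ℕ) →
    ((Δ ^ n) p).degree = ((d - n : ℕ) : WithBot ℕ) := by
  induction n with
  | zero => intro d _ p hp; simpa using hp
  | succ n ih =>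
    intro d hnd p hp
    have h1 : 1 ≤ d := le_trans (Nat.succ_le_succ (Nat.zero_le n)) hnd
    have hΔp := deg_exact' Δ hΔ1 hΔ d h1 p hp
    have := ih (d - 1) (by omega) (Δ p) hΔp
    rw [pow_succ, Module.End.mul_apply, this]
    congr 1
    omega

include hΔ1 hΔ in
lemma vanish' (n : ℕ) : ∀ p : Polynomial F, p.degree < (n : ℕ) → (Δ ^ n) p = 0 := by
  induction n with
  | zero =>
    intro p hp
    have : p = 0 := by
      by_contra h
      rw [p.degree_eq_natDegree h] at hp
      exact_mod_cast Nat.not_lt_zero _ (by exact_mod_cast hp)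
    simp [this]
  | succ n ih =>
    intro p hp
    rw [pow_succ, Module.End.mul_apply]
    rcases eq_or_ne p 0 with h | h
    · simp [h]
    · refine ih (Δ p) ?_
      have h1 : p.natDegree ≤ n := by
        rw [p.degree_eq_natDegree h, Nat.cast_lt] at hp; omega
      have := deg_lt' Δ hΔ1 hΔ p h
      rw [p.degree_eq_natDegree h] at this
      exact lt_of_lt_of_le this (by exact_mod_cast h1)

include hΔ1 hΔ in
lemma const' (m : ℕ) :
    (Δ ^ m) (X ^ m) = C (((Δ ^ m) (X ^ m)).coeff 0) ∧ ((Δ ^ m) (X ^ m)).coeff 0 ≠ 0 := by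
  have hdeg : ((Δ ^ m) (X ^ m)).degree = ((0 : ℕ) : WithBot ℕ) := by
    have := deg_pow' Δ hΔ1 hΔ m m le_rfl (X ^ m) (degree_X_pow m)
    simpa using this
  have hne : (Δ ^ m) (X ^ m) ≠ 0 := fun h => by simp [h] at hdeg
  refine ⟨(eq_C_of_degree_le_zero (le_of_eq hdeg)), fun h => ?_⟩
  exact hne (by rw [eq_C_of_degree_le_zero (le_of_eq hdeg), h, map_zero])

end Aux

noncomputable def qsAux {F : Type*} [Field F]
    (Δ T : Polynomial F →ₗ[F] Polynomial F) : ℕ → Polynomial F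
  | m => (((Δ ^ m) (X ^ m)).coeff 0)⁻¹ •
      (T (X ^ m) - ∑ n ∈ (Finset.range m).attach, qsAux Δ T n * (Δ ^ (n : ℕ)) (X ^ m))
termination_by m => m
decreasing_by exact Finset.mem_range.mp n.2

lemma qsAux_eq {F : Type*} [Field F] (Δ T : Polynomial F →ₗ[F] Polynomial F) (m : ℕ) :
    qsAux Δ T m = (((Δ ^ m) (X ^ m)).coeff 0)⁻¹ •
      (T (X ^ m) - ∑ n ∈ Finset.range m, qsAux Δ T n * (Δ ^ n) (X ^ m)) := by
  rw [qsAux, ← Finset.sum_attach (Finset.range m) (fun n => qsAux Δ T n * (Δ ^ n) (X ^ m))]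

/-- Expansion theorem: every linear operator T on F[x] has a unique expansion
T = Σ_{n≥0} q_n(x̂) Δⁿ where Δ lowers degree by exactly one. -/
theorem operator_expansion_unique {F : Type*} [Field F] [CharZero F]
    (Δ : Polynomial F →ₗ[F] Polynomial F)
    (hΔ1 : Δ 1 = 0)
    (hΔ : ∀ n : ℕ, 1 ≤ n → (Δ (X ^ n)).degree = ((n - 1 : ℕ) : WithBot ℕ))
    (T : Polynomial F →ₗ[F] Polynomial F) :
    ∃! qs : ℕ → Polynomial F,
      ∀ p : Polynomial F,
        T p = ∑ n ∈ range (p.natDegree + 1), qs n * ((Δ ^ n) p) := by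
  set qs : ℕ → Polynomial F := qsAux Δ T with hqsdef
  -- step 1 : the defining property on monomials
  have step1 : ∀ m : ℕ, T (X ^ m) = ∑ n ∈ range (m + 1), qs n * (Δ ^ n) (X ^ m) := by
    intro m
    obtain ⟨hC, hcne⟩ := const' Δ hΔ1 hΔ m
    set c : F := ((Δ ^ m) (X ^ m)).coeff 0 with hc
    rw [Finset.sum_range_succ]
    have hlast : qs m * (Δ ^ m) (X ^ m)
        = T (X ^ m) - ∑ n ∈ range m, qs n * (Δ ^ n) (X ^ m) := by
      rw [hqsdef, qsAux_eq, hC, ← hqsdef]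
      rw [smul_mul_assoc, mul_comm _ (C c), ← Polynomial.smul_eq_C_mul, smul_smul,
        coeff_C_zero, inv_mul_cancel₀ hcne, one_smul]
    rw [hlast]
    ring
  -- vanishing beyond the degree
  have hvanish : ∀ (n : ℕ) (p : Polynomial F), p.natDegree < n → (Δ ^ n) p = 0 := by
    intro n p hn
    refine vanish' Δ hΔ1 hΔ n p ?_
    exact lt_of_le_of_lt (degree_le_natDegree) (by exact_mod_cast hn)
  -- step 1' : extended range on monomials
  have step1' : ∀ M m : ℕ, m ≤ M →
      T (X ^ m) = ∑ n ∈ range (M + 1), qs n * (Δ ^ n) (X ^ m) := by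
    intro M m hm
    rw [step1 m]
    refine Finset.sum_subset (Finset.range_subset_range.mpr (by omega)) fun n _ hn => ?_
    have : m < n := by simpa using Finset.mem_range.not.mp hn
    rw [hvanish n (X ^ m) (by simpa [natDegree_X_pow] using this), mul_zero]
  -- key : the property for any sufficiently large truncation
  have key : ∀ (M : ℕ) (p : Polynomial F), p.natDegree ≤ M →
      T p = ∑ n ∈ range (M + 1), qs n * (Δ ^ n) p := by
    intro M p hpM
    have hpE : p = ∑ m ∈ range (M + 1), p.coeff m • X ^ m := by
      conv_lhs => rw [p.as_sum_range' (M + 1) (by omega)]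
      exact Finset.sum_congr rfl fun m _ => (smul_X_eq_monomial).symm
    calc T p = ∑ m ∈ range (M + 1), p.coeff m • T (X ^ m) := by
          conv_lhs => rw [hpE]
          rw [map_sum]
          exact Finset.sum_congr rfl fun m _ => map_smul T _ _
      _ = ∑ m ∈ range (M + 1), ∑ n ∈ range (M + 1),
            qs n * (p.coeff m • (Δ ^ n) (X ^ m)) := by
          refine Finset.sum_congr rfl fun m hm => ?_
          rw [step1' M m (by simpa using Nat.lt_succ_iff.mp (Finset.mem_range.mp hm)),
            Finset.smul_sum]
          exact Finset.sum_congr rfl fun n _ => (mul_smul_comm _ _ _).symm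
      _ = ∑ n ∈ range (M + 1), qs n * (Δ ^ n) p := by
          rw [Finset.sum_comm]
          refine Finset.sum_congr rfl fun n _ => ?_
          rw [← Finset.mul_sum]
          congr 1
          conv_rhs => rw [hpE]
          rw [map_sum]
          exact Finset.sum_congr rfl fun m _ => (map_smul ((Δ ^ n)) _ _).symm
  refine ⟨qs, fun p => key p.natDegree p le_rfl, ?_⟩
  -- uniqueness
  intro qs' h'
  funext m
  induction m using Nat.strong_induction_on with
  | _ m ih =>
    obtain ⟨hC, hcne⟩ := const' Δ hΔ1 hΔ m
    have e1 := h' (X ^ m)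
    have e2 := key (X ^ m).natDegree (X ^ m) le_rfl
    rw [natDegree_X_pow] at e1 e2
    have heq : ∑ n ∈ range (m + 1), qs' n * (Δ ^ n) (X ^ m)
        = ∑ n ∈ range (m + 1), qs n * (Δ ^ n) (X ^ m) := e1.symm.trans e2
    rw [Finset.sum_range_succ, Finset.sum_range_succ,
      Finset.sum_congr rfl (fun n hn => by rw [ih n (Finset.mem_range.mp hn)])] at heq
    have hlast : qs' m * (Δ ^ m) (X ^ m) = qs m * (Δ ^ m) (X ^ m) := by
      exact add_left_cancel heq
    rw [hC] at hlast
    exact mul_right_cancel₀ (fun h => hcne (by simpa using (C_eq_zero).mp h)) hlast
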